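/- In the kernel J of the derivation d (with d(xₙ) = x_{n-1}, x₀ = 0, deg xₙ = n) on ℚ[x₁, x₂, ...], the only elements of degree 2 are scalar multiples of x₁² and the only elements of degree 3 are scalar multiples of x₁³. Consequently J is not a polynomial algebra on generators of degrees ≥ 2, since the degree-2 and degree-3 elements x₁² and x₁³ are algebraically dependent. -/
import Mathlib


open MvPolynomial


lemma weight_single_nat (i k : ℕ) :
    Finsupp.weight (fun i : ℕ => i + 1) (Finsupp.single i k) = k * (i + 1) := by
  simp [Finsupp.weight_apply, Finsupp.sum_single_index, smul_eq_mul]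

lemma vanish_high {m : ℕ →₀ ℕ} {n : ℕ} (h : Finsupp.weight (fun i : ℕ => i + 1) m = n)
    {i : ℕ} (hi : n ≤ i) : m i = 0 := by
  by_contra hne
  have H := Finsupp.le_weight_of_ne_zero (w := fun i : ℕ => i + 1) (fun s => Nat.zero_le _) hne
  rw [h] at H
  omega

lemma enum2 {m : ℕ →₀ ℕ} (h : Finsupp.weight (fun i : ℕ => i + 1) m = 2) :
    m = Finsupp.single 0 2 ∨ m = Finsupp.single 1 1 := by
  have hm : m = Finsupp.single 0 (m 0) + Finsupp.single 1 (m 1) := by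
    ext i
    match i with
    | 0 => simp
    | 1 => simp
    | (k+2) => simp [Finsupp.single_apply, vanish_high h (show 2 ≤ k+2 by omega)]
  have hw : m 0 * 1 + m 1 * 2 = 2 := by
    rw [hm] at h
    rw [map_add, weight_single_nat, weight_single_nat] at h
    omega
  rcases (by omega : (m 0 = 2 ∧ m 1 = 0) ∨ (m 0 = 0 ∧ m 1 = 1)) with ⟨h0, h1⟩ | ⟨h0, h1⟩
  · left; rw [hm, h0, h1]; simp
  · right; rw [hm, h0, h1]; simp

lemma enum3 {m : ℕ →₀ ℕ} (h : Finsupp.weight (fun i : ℕ => i + 1) m = 3) :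
    m = Finsupp.single 0 3 ∨ m = Finsupp.single 0 1 + Finsupp.single 1 1 ∨
      m = Finsupp.single 2 1 := by
  have hm : m = Finsupp.single 0 (m 0) + Finsupp.single 1 (m 1) + Finsupp.single 2 (m 2) := by
    ext i
    match i with
    | 0 => simp
    | 1 => simp
    | 2 => simp
    | (k+3) => simp [Finsupp.single_apply, vanish_high h (show 3 ≤ k+3 by omega)]
  have hw : m 0 * 1 + m 1 * 2 + m 2 * 3 = 3 := by
    rw [hm] at h
    rw [map_add, map_add, weight_single_nat, weight_single_nat, weight_single_nat] at h
    omega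
  rcases (by omega : (m 0 = 3 ∧ m 1 = 0 ∧ m 2 = 0) ∨ (m 0 = 1 ∧ m 1 = 1 ∧ m 2 = 0) ∨
      (m 0 = 0 ∧ m 1 = 0 ∧ m 2 = 1)) with ⟨h0,h1,h2⟩|⟨h0,h1,h2⟩|⟨h0,h1,h2⟩
  · left; rw [hm, h0, h1, h2]; simp
  · right; left; rw [hm, h0, h1, h2]; simp
  · right; right; rw [hm, h0, h1, h2]; simp

/-- The derivation `d` on `A = ℚ[x₁, x₂, …]` (with `X i` standing for `x_{i+1}`)
determined by `d x₁ = 0` and `d xₙ = x_{n-1}` for `n ≥ 2`. -/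
noncomputable def dDer : Derivation ℚ (MvPolynomial ℕ ℚ) (MvPolynomial ℕ ℚ) :=
  MvPolynomial.mkDerivation ℚ (fun i => if i = 0 then 0 else X (i - 1))

lemma dX0 : dDer (X 0) = 0 := by simp [dDer, mkDerivation_X]
lemma dX1 : dDer (X 1) = X 0 := by simp [dDer, mkDerivation_X]
lemma dX2 : dDer (X 2) = X 1 := by simp [dDer, mkDerivation_X]

/-- In `J = ker d`, the only elements of degree 2 are scalar multiples of `x₁²`
and the only elements of degree 3 are scalar multiples of `x₁³`; moreover these
two elements are algebraically dependent: `(x₁²)³ = (x₁³)²`. -/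
theorem stmt_3 :
    (∀ f : MvPolynomial ℕ ℚ, f.IsWeightedHomogeneous (fun i : ℕ => i + 1) 2 →
        dDer f = 0 → ∃ c : ℚ, f = c • (X 0) ^ 2) ∧
    (∀ f : MvPolynomial ℕ ℚ, f.IsWeightedHomogeneous (fun i : ℕ => i + 1) 3 →
        dDer f = 0 → ∃ c : ℚ, f = c • (X 0) ^ 3) ∧
    ((X 0 : MvPolynomial ℕ ℚ) ^ 2) ^ 3 = ((X 0 : MvPolynomial ℕ ℚ) ^ 3) ^ 2 := by
  refine ⟨?_, ?_, by ring⟩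
  · intro f hf hd
    set a := coeff (Finsupp.single 0 2) f with ha
    set b := coeff (Finsupp.single 1 1) f with hb
    have d01 : Finsupp.single 0 (2:ℕ) ≠ Finsupp.single 1 1 := by
      intro h; simpa using DFunLike.congr_fun h 0
    have hf2 : f = a • (X 0) ^ 2 + b • X 1 := by
      ext m
      simp only [coeff_add, coeff_smul, smul_eq_mul, X_pow_eq_monomial, coeff_monomial,
        coeff_X']
      by_cases h0 : m = Finsupp.single 0 2
      · subst h0; simp [ha, d01, d01.symm]
      · by_cases h1 : m = Finsupp.single 1 1
        · subst h1; simp [hb, d01, d01.symm]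
        · have hz : coeff m f = 0 := by
            by_contra hne
            rcases enum2 (hf hne) with h | h <;> tauto
          have e0 : ¬ (Finsupp.single 0 (2:ℕ) = m) := fun h => h0 h.symm
          have e1 : ¬ (Finsupp.single 1 (1:ℕ) = m) := fun h => h1 h.symm
          simp [hz, e0, e1]
    have hdf : dDer f = b • X 0 := by
      rw [hf2, map_add, Derivation.map_smul, Derivation.map_smul, Derivation.leibniz_pow,
        dX0, dX1]
      simp
    rw [hdf] at hd
    have hb0 : b = 0 := by
      have := congrArg (coeff (Finsupp.single 0 1)) hd
      simpa [coeff_smul, coeff_X'] using this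
    exact ⟨a, by rw [hf2, hb0]; simp⟩
  · intro f hf hd
    set a := coeff (Finsupp.single 0 3) f with ha
    set b := coeff (Finsupp.single 0 1 + Finsupp.single 1 1) f with hb
    set c := coeff (Finsupp.single 2 1) f with hc
    have hX01 : (X 0 : MvPolynomial ℕ ℚ) * X 1
        = monomial (Finsupp.single 0 1 + Finsupp.single 1 1) 1 := by
      rw [X, X, monomial_mul, one_mul]
    have d01 : Finsupp.single 0 (3:ℕ) ≠ Finsupp.single 0 1 + Finsupp.single 1 1 := by
      intro h; simpa using DFunLike.congr_fun h 1
    have d02 : Finsupp.single 0 (3:ℕ) ≠ Finsupp.single 2 1 := by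
      intro h; simpa using DFunLike.congr_fun h 0
    have d12 : Finsupp.single 0 1 + Finsupp.single 1 (1:ℕ) ≠ Finsupp.single 2 1 := by
      intro h; simpa using DFunLike.congr_fun h 0
    have hf2 : f = a • (X 0) ^ 3 + b • (X 0 * X 1) + c • X 2 := by
      ext m
      simp only [coeff_add, coeff_smul, smul_eq_mul, X_pow_eq_monomial, hX01, coeff_monomial,
        coeff_X']
      by_cases h0 : m = Finsupp.single 0 3
      · subst h0; simp [ha, d01, d01.symm, d02, d02.symm]
      · by_cases h1 : m = Finsupp.single 0 1 + Finsupp.single 1 1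
        · subst h1; simp [hb, d01, d01.symm, d12, d12.symm]
        · by_cases h2 : m = Finsupp.single 2 1
          · subst h2; simp [hc, d02, d02.symm, d12, d12.symm]
          · have hz : coeff m f = 0 := by
              by_contra hne
              rcases enum3 (hf hne) with h | h | h <;> tauto
            have e0 : ¬ (Finsupp.single 0 (3:ℕ) = m) := fun h => h0 h.symm
            have e1 : ¬ (Finsupp.single 0 1 + Finsupp.single 1 (1:ℕ) = m) := fun h => h1 h.symm
            have e2 : ¬ (Finsupp.single 2 (1:ℕ) = m) := fun h => h2 h.symm
            simp [hz, e0, e1, e2]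
    have hdf : dDer f = b • (X 0) ^ 2 + c • X 1 := by
      rw [hf2, map_add, map_add, Derivation.map_smul, Derivation.map_smul, Derivation.map_smul,
        Derivation.leibniz_pow, Derivation.leibniz, dX0, dX1, dX2]
      simp [smul_smul, sq]
    rw [hdf] at hd
    have d : Finsupp.single 0 (2:ℕ) ≠ Finsupp.single 1 1 := by
      intro h; simpa using DFunLike.congr_fun h 0
    have hb0 : b = 0 := by
      have := congrArg (coeff (Finsupp.single 0 2)) hd
      simpa [coeff_smul, X_pow_eq_monomial, coeff_monomial, coeff_X', d, d.symm] using this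
    have hc0 : c = 0 := by
      have := congrArg (coeff (Finsupp.single 1 1)) hd
      simpa [coeff_smul, X_pow_eq_monomial, coeff_monomial, coeff_X', d, d.symm] using this
    exact ⟨a, by rw [hf2, hb0, hc0]; simp⟩
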